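/- Let H be a triangle-free simple graph. If H contains a heavy matching of size 4, that is, four pairwise nonadjacent edges e1, e2, e3, e4 with ed(e_i) ≥ (|E(H)| - 2)/3 for each i, then |E(H)| ≤ 32. -/

import Mathlib

open SimpleGraph

/-- The edge-degree of `e` in `H`: the number of edges of `H` other than `e`
sharing an endpoint with `e`. -/
noncomputable def edgeDeg {V : Type*} (H : SimpleGraph V) (e : Sym2 V) : ℕ :=
  {f | f ∈ H.edgeSet ∧ f ≠ e ∧ ∃ v, v ∈ f ∧ v ∈ e}.ncard

/-- Two edges are nonadjacent if they share no endpoint. -/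
def EdgesNonadj {V : Type*} (e f : Sym2 V) : Prop :=
  ∀ v, v ∈ e → v ∉ f

/-!
Summing the edge-degrees over a matching `M` counts every edge `f` outside `M` once for each
edge of `M` it meets. If that number is `c`, then `c ≤ 1 + c (c - 1) / 2`, and the pairs
counted by `c (c - 1) / 2` are charged to pairs of matching edges: in a triangle-free graph at
most two edges join two disjoint edges. Hence the degree sum is at most `|E| - |M| + |M| (|M| - 1)`,
which for four heavy edges gives `4 (|E| - 2) / 3 ≤ |E| + 8`.
-/

open Finset

lemma EdgesNonadj.symm {V : Type*} {e f : Sym2 V} (h : EdgesNonadj e f) : EdgesNonadj f e :=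
  fun v hf he => h v he hf

instance {V : Type*} : Std.Symm (EdgesNonadj (V := V)) :=
  ⟨fun _ _ => EdgesNonadj.symm⟩

lemma EdgesNonadj.ne {V : Type*} {e f : Sym2 V} (h : EdgesNonadj e f) : e ≠ f := by
  rintro rfl
  exact h _ e.out_fst_mem e.out_fst_mem

namespace SimpleGraph

variable {V : Type*} {H : SimpleGraph V}

lemma CliqueFree.not_adj_of_adj_of_adj (htf : H.CliqueFree 3) {x y z : V} (hxy : H.Adj x y)
    (hxz : H.Adj x z) : ¬H.Adj y z := by
  classical
  exact fun hyz => htf {x, y, z} (is3Clique_triple_iff.mpr ⟨hxy, hxz, hyz⟩)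

open scoped Classical

variable [Fintype V]

lemma edgeDeg_eq_card_filter (e : Sym2 V) :
    edgeDeg H e = #{f ∈ H.edgeFinset | f ≠ e ∧ ∃ v, v ∈ f ∧ v ∈ e} := by
  rw [edgeDeg, ← Set.ncard_coe_finset, coe_filter]
  simp only [mem_edgeFinset]

lemma card_edges_through_meeting_le_one (htf : H.CliqueFree 3) {e : Sym2 V}
    (he : e ∈ H.edgeSet) {x : V} (hx : x ∉ e) :
    #{f ∈ H.edgeFinset | x ∈ f ∧ ∃ v, v ∈ f ∧ v ∈ e} ≤ 1 := by
  have hform : ∀ f ∈ ({f ∈ H.edgeFinset | x ∈ f ∧ ∃ v, v ∈ f ∧ v ∈ e} : Finset _),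
      ∃ y ∈ e, H.Adj x y ∧ f = s(x, y) := by
    intro f hf
    obtain ⟨hfE, hxf, v, hvf, hve⟩ := mem_filter.mp hf
    have hxv : x ≠ v := fun h => hx (h ▸ hve)
    have hf : f = s(x, v) := (Sym2.mem_and_mem_iff hxv).mp ⟨hxf, hvf⟩
    exact ⟨v, hve, by rwa [hf, mem_edgeFinset, mem_edgeSet] at hfE, hf⟩
  refine card_le_one.mpr fun f hf g hg => ?_
  obtain ⟨y, hye, hxy, rfl⟩ := hform f hf
  obtain ⟨z, hze, hxz, rfl⟩ := hform g hg
  by_contra hne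
  have hyz : y ≠ z := fun h => hne (h ▸ rfl)
  have he' : e = s(y, z) := (Sym2.mem_and_mem_iff hyz).mp ⟨hye, hze⟩
  exact htf.not_adj_of_adj_of_adj hxy hxz (by rwa [he'] at he)

lemma card_edges_meeting_both_le_two (htf : H.CliqueFree 3) {e e' : Sym2 V}
    (hee' : EdgesNonadj e e') (he' : e' ∈ H.edgeSet) :
    #{f ∈ H.edgeFinset | (∃ v, v ∈ f ∧ v ∈ e) ∧ ∃ v, v ∈ f ∧ v ∈ e'} ≤ 2 := by
  induction e using Sym2.ind with
  | _ a b =>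
  calc _ ≤ #({f ∈ H.edgeFinset | a ∈ f ∧ ∃ v, v ∈ f ∧ v ∈ e'} ∪
          {f ∈ H.edgeFinset | b ∈ f ∧ ∃ v, v ∈ f ∧ v ∈ e'}) := by
        refine card_le_card fun f hf => ?_
        obtain ⟨hfE, ⟨u, huf, hu⟩, hmeet⟩ := mem_filter.mp hf
        rcases Sym2.mem_iff.mp hu with rfl | rfl
        · exact mem_union_left _ (mem_filter.mpr ⟨hfE, huf, hmeet⟩)
        · exact mem_union_right _ (mem_filter.mpr ⟨hfE, huf, hmeet⟩)
    _ ≤ 1 + 1 := (card_union_le _ _).trans (add_le_add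
        (card_edges_through_meeting_le_one htf he' (hee' a (Sym2.mem_mk_left a b)))
        (card_edges_through_meeting_le_one htf he' (hee' b (Sym2.mem_mk_right a b))))

theorem sum_edgeDeg_add_card_le (htf : H.CliqueFree 3) {M : Finset (Sym2 V)}
    (hM : (M : Set (Sym2 V)) ⊆ H.edgeSet) (hMatch : (M : Set (Sym2 V)).Pairwise EdgesNonadj) :
    ∑ e ∈ M, edgeDeg H e + #M ≤ #H.edgeFinset + #M.offDiag := by
  set E := H.edgeFinset
  let r : Sym2 V → Sym2 V → Prop := fun e f => f ≠ e ∧ ∃ v, v ∈ f ∧ v ∈ e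
  let c : Sym2 V → ℕ := fun f => #{e ∈ M | r e f}
  have hME : M ⊆ E := fun e he => mem_edgeFinset.mpr (hM he)
  have hsum : ∑ e ∈ M, edgeDeg H e = ∑ f ∈ E, c f := by
    simp only [edgeDeg_eq_card_filter]
    exact sum_card_bipartiteAbove_eq_sum_card_bipartiteBelow r
  have hc_matching : ∀ f ∈ M, c f = 0 := fun f hf => card_eq_zero.mpr <|
    filter_eq_empty_iff.mpr fun e he ⟨hfe, v, hvf, hve⟩ => hMatch hf he hfe v hvf hve
  have hpairs : ∑ f ∈ E, c f * (c f - 1) ≤ 2 * #M.offDiag := by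
    calc ∑ f ∈ E, c f * (c f - 1)
        = ∑ f ∈ E, #{p ∈ M.offDiag | r p.1 f ∧ r p.2 f} := by
          refine sum_congr rfl fun f _ => ?_
          rw [Nat.mul_sub_one, ← offDiag_card]
          congr 1
          ext p
          simp only [mem_offDiag, mem_filter]
          tauto
      _ = ∑ p ∈ M.offDiag, #{f ∈ E | r p.1 f ∧ r p.2 f} :=
          (sum_card_bipartiteAbove_eq_sum_card_bipartiteBelow _).symm
      _ ≤ ∑ p ∈ M.offDiag, 2 := sum_le_sum fun p hp => by
          obtain ⟨hp₁, hp₂, hne⟩ := mem_offDiag.mp hp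
          refine (card_le_card fun f hf => ?_).trans
            (card_edges_meeting_both_le_two htf (hMatch hp₁ hp₂ hne) (hM hp₂))
          simp only [mem_filter] at hf ⊢
          exact ⟨hf.1, hf.2.1.2, hf.2.2.2⟩
      _ = 2 * #M.offDiag := by rw [sum_const, smul_eq_mul, mul_comm]
  -- `(n - 1) (n - 2) ≥ 0`
  have hquad : ∀ n : ℕ, 2 * n ≤ 2 + n * (n - 1) := by
    rintro (_ | n)
    · simp
    · simp only [Nat.add_sub_cancel]
      nlinarith [Nat.le_mul_self n]
  have hsum_off_matching : ∑ f ∈ E, c f = ∑ f ∈ E \ M, c f :=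
    (sum_subset sdiff_subset fun f _ hf => hc_matching f (by simpa [‹f ∈ E›] using hf)).symm
  have hdouble : 2 * ∑ f ∈ E, c f ≤ 2 * #(E \ M) + ∑ f ∈ E, c f * (c f - 1) := by
    calc 2 * ∑ f ∈ E, c f = ∑ f ∈ E \ M, 2 * c f := by rw [hsum_off_matching, mul_sum]
      _ ≤ ∑ f ∈ E \ M, (2 + c f * (c f - 1)) := sum_le_sum fun f _ => hquad (c f)
      _ ≤ 2 * #(E \ M) + ∑ f ∈ E, c f * (c f - 1) := by
          rw [sum_add_distrib, sum_const, smul_eq_mul, mul_comm]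
          gcongr
          exact sdiff_subset
  have := card_le_card hME
  rw [card_sdiff_of_subset hME] at hdouble
  omega

end SimpleGraph

/-- A triangle-free graph containing a heavy matching of size `4` (four pairwise
nonadjacent edges of edge-degree at least `(|E(H)| - 2)/3`) has at most `32` edges. -/
theorem edge_bound_of_heavy_matching {V : Type*} [Fintype V] (H : SimpleGraph V)
    (htf : H.CliqueFree 3)
    (e₁ e₂ e₃ e₄ : Sym2 V)
    (he₁ : e₁ ∈ H.edgeSet) (he₂ : e₂ ∈ H.edgeSet)
    (he₃ : e₃ ∈ H.edgeSet) (he₄ : e₄ ∈ H.edgeSet)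
    (h12 : EdgesNonadj e₁ e₂) (h13 : EdgesNonadj e₁ e₃) (h14 : EdgesNonadj e₁ e₄)
    (h23 : EdgesNonadj e₂ e₃) (h24 : EdgesNonadj e₂ e₄) (h34 : EdgesNonadj e₃ e₄)
    (hheavy₁ : ((H.edgeSet.ncard : ℝ) - 2) / 3 ≤ edgeDeg H e₁)
    (hheavy₂ : ((H.edgeSet.ncard : ℝ) - 2) / 3 ≤ edgeDeg H e₂)
    (hheavy₃ : ((H.edgeSet.ncard : ℝ) - 2) / 3 ≤ edgeDeg H e₃)
    (hheavy₄ : ((H.edgeSet.ncard : ℝ) - 2) / 3 ≤ edgeDeg H e₄) :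
    H.edgeSet.ncard ≤ 32 := by
  classical
  set M : Finset (Sym2 V) := {e₁, e₂, e₃, e₄}
  have hM : (M : Set (Sym2 V)) ⊆ H.edgeSet := by
    simp [M, Set.insert_subset_iff, he₁, he₂, he₃, he₄]
  have hMatch : (M : Set (Sym2 V)).Pairwise EdgesNonadj := by
    simp [M, Set.pairwise_insert_of_symm, h12, h13, h14, h23, h24, h34]
  have hbound := SimpleGraph.sum_edgeDeg_add_card_le htf hM hMatch
  have hcard : #M = 4 := by
    rw [card_insert_of_notMem, card_insert_of_notMem, card_pair h34.ne]
    · simp [h23.ne, h24.ne]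
    · simp [h12.ne, h13.ne, h14.ne]
  rw [offDiag_card, hcard, sum_insert (by simp [h12.ne, h13.ne, h14.ne]),
    sum_insert (by simp [h23.ne, h24.ne]), sum_pair h34.ne] at hbound
  rw [← coe_edgeFinset, Set.ncard_coe_finset] at hheavy₁ hheavy₂ hheavy₃ hheavy₄ ⊢
  have hbound_real :
      (edgeDeg H e₁ + (edgeDeg H e₂ + (edgeDeg H e₃ + edgeDeg H e₄)) : ℝ) + 4 ≤
        #H.edgeFinset + 12 := by exact_mod_cast hbound
  have : (#H.edgeFinset : ℝ) ≤ 32 := by linarith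
  exact_mod_cast this
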